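/- For 0 < q < 1, z > 0, and n ≥ 0, the identity J_n(q;z)·(q^{n(n+1)/2} z^{n+1}/(q;q)_{n+1} - q^{n(n-1)/2} z^n/(q;q)_n) + q^{n^2} z^{2n+1}/((q;q)_n (q;q)_{n+1}) = Σ_{k=0}^∞ q^{(n(n+1)+(n+k)(n+k+1))/2} (1 - q^{k+1}) / ((q;q)_{n+1}(q;q)_{n+k+2}) · z^{2n+2+k} holds. -/

import Mathlib

open Finset Filter Topology

noncomputable def qPoch (q : ℝ) (m : ℕ) : ℝ := ∏ j ∈ Finset.range m, (1 - q ^ (j + 1))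

/-- Tail of the q-exponential e(q;z) starting at index m; I_n(q;z) = qexpTail q z (n+1). -/
noncomputable def qexpTail (q z : ℝ) (m : ℕ) : ℝ := ∑' k : ℕ, z ^ (m + k) / qPoch q (m + k)

/-- Tail of the q-exponential E(q;z) starting at index m; J_n(q;z) = qExpTail q z (n+1). -/
noncomputable def qExpTail (q z : ℝ) (m : ℕ) : ℝ :=
  ∑' k : ℕ, q ^ ((m + k) * (m + k - 1) / 2) * z ^ (m + k) / qPoch q (m + k)

/-!
Write `t m = q^(m(m-1)/2) z^m / (q;q)_m` (`qExpTerm q z m`), so that `J_n = ∑_k t (n+1+k)`.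
Splitting off the first term of `J_n · t n` gives the telescoping rearrangement
`J_n (t (n+1) - t n) + t n · t (n+1) = ∑_k (t (n+1+k) · t (n+1) - t (n+2+k) · t n)`,
and the correction term of the theorem is exactly `t n · t (n+1)`. Each summand on the right
collapses to the stated one through the recurrence `t (m+1) = t m · q^m z / (1 - q^(m+1))`.
-/

theorem tsum_mul_sub_add_eq_tsum_sub_shift {R : Type*} [Ring R] [TopologicalSpace R]
    [IsTopologicalRing R] [T2Space R] {f : ℕ → R} (hf : Summable f) (a b : R) :
    (∑' k, f k) * (a - b) + f 0 * b = ∑' k, (f k * a - f (k + 1) * b) := by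
  have ha := hf.mul_right a
  have hb := hf.mul_right b
  have hb' := ((summable_nat_add_iff 1).mpr hf).mul_right b
  rw [mul_sub, ← hf.tsum_mul_right, ← hf.tsum_mul_right, hb.tsum_eq_zero_add, ha.tsum_sub hb']
  abel

theorem qPoch_succ (q : ℝ) (m : ℕ) : qPoch q (m + 1) = qPoch q m * (1 - q ^ (m + 1)) :=
  Finset.prod_range_succ _ _

theorem mul_pred_div_two_add_mul_succ_div_two (n : ℕ) :
    n * (n - 1) / 2 + n * (n + 1) / 2 = n ^ 2 := by
  apply Nat.eq_of_mul_eq_mul_left two_pos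
  rw [mul_add, Nat.two_mul_div_two_of_even (Nat.even_mul_pred_self n),
    Nat.two_mul_div_two_of_even (Nat.even_mul_succ_self n)]
  cases n <;> simp; ring

noncomputable def qExpTerm (q z : ℝ) (m : ℕ) : ℝ := q ^ (m * (m - 1) / 2) * z ^ m / qPoch q m

theorem qExpTerm_succ_eq (q z : ℝ) (m : ℕ) :
    qExpTerm q z (m + 1) = q ^ (m * (m + 1) / 2) * z ^ (m + 1) / qPoch q (m + 1) := by
  rw [qExpTerm, Nat.add_sub_cancel, mul_comm (m + 1)]

theorem qExpTerm_succ (q z : ℝ) (m : ℕ) :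
    qExpTerm q z (m + 1) = qExpTerm q z m * (q ^ m * z / (1 - q ^ (m + 1))) := by
  rw [qExpTerm, qExpTerm, Nat.triangle_succ, qPoch_succ, pow_add, pow_succ z, div_mul_div_comm]
  ring

section

variable {q : ℝ}

theorem qPoch_pos (hq0 : 0 ≤ q) (hq1 : q < 1) (m : ℕ) : 0 < qPoch q m :=
  Finset.prod_pos fun j _ => sub_pos.mpr (pow_lt_one₀ hq0 hq1 j.succ_ne_zero)

theorem summable_qExpTerm (hq0 : 0 ≤ q) (hq1 : q < 1) (z : ℝ) : Summable (qExpTerm q z) := by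
  have hratio : Tendsto (fun m : ℕ => q ^ m * |z| / (1 - q ^ (m + 1))) atTop (𝓝 0) := by
    have hpow := tendsto_pow_atTop_nhds_zero_of_lt_one hq0 hq1
    simpa [Pi.div_def] using (hpow.mul_const |z|).div
      ((hpow.comp (tendsto_add_atTop_nat 1)).const_sub 1) (by norm_num)
  refine summable_of_ratio_norm_eventually_le (r := 1 / 2) (by norm_num) ?_
  filter_upwards [hratio.eventually (ge_mem_nhds (by norm_num : (0 : ℝ) < 1 / 2))] with m hm
  rw [qExpTerm_succ, norm_mul, mul_comm]
  gcongr
  rwa [Real.norm_eq_abs, abs_div, abs_mul, abs_of_nonneg (pow_nonneg hq0 m),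
    abs_of_pos (sub_pos.mpr (pow_lt_one₀ hq0 hq1 m.succ_ne_zero))]

theorem qExpTerm_mul_sub (hq0 : 0 ≤ q) (hq1 : q < 1) (z : ℝ) (n k : ℕ) :
    qExpTerm q z (n + 1 + k) * qExpTerm q z (n + 1) -
        qExpTerm q z (n + 1 + k + 1) * qExpTerm q z n =
      q ^ ((n * (n + 1) + (n + k) * (n + k + 1)) / 2) * (1 - q ^ (k + 1)) /
        (qPoch q (n + 1) * qPoch q (n + k + 2)) * z ^ (2 * n + 2 + k) := by
  have hne : ∀ j : ℕ, (1 : ℝ) - q ^ (j + 1) ≠ 0 :=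
    fun j => (sub_pos.mpr (pow_lt_one₀ hq0 hq1 j.succ_ne_zero)).ne'
  have hrhs : q ^ ((n * (n + 1) + (n + k) * (n + k + 1)) / 2) * (1 - q ^ (k + 1)) /
        (qPoch q (n + 1) * qPoch q (n + k + 2)) * z ^ (2 * n + 2 + k) =
      qExpTerm q z (n + 1) * qExpTerm q z (n + 1 + k) * (1 - q ^ (k + 1)) /
        (1 - q ^ (n + 1 + k + 1)) := by
    rw [Nat.add_div_of_dvd_right (Nat.even_mul_succ_self n).two_dvd, pow_add,
      show n + 1 + k = n + k + 1 by ring, qExpTerm_succ_eq, qExpTerm_succ_eq,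
      qPoch_succ q (n + k + 1)]
    have := qPoch_pos hq0 hq1 (n + k + 1)
    field_simp [hne (n + k + 1)]
    ring
  rw [hrhs, qExpTerm_succ q z (n + 1 + k), qExpTerm_succ q z n]
  field_simp [hne n, hne (n + 1 + k)]
  ring

end

theorem J_linear_identity_general (q z : ℝ) (n : ℕ) (hq0 : 0 < q) (hq1 : q < 1) :
    qExpTail q z (n + 1) *
        (q ^ (n * (n + 1) / 2) * z ^ (n + 1) / qPoch q (n + 1) -
          q ^ (n * (n - 1) / 2) * z ^ n / qPoch q n) +
        q ^ (n ^ 2) * z ^ (2 * n + 1) / (qPoch q n * qPoch q (n + 1)) =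
      ∑' k : ℕ, q ^ ((n * (n + 1) + (n + k) * (n + k + 1)) / 2) * (1 - q ^ (k + 1)) /
        (qPoch q (n + 1) * qPoch q (n + k + 2)) * z ^ (2 * n + 2 + k) := by
  have hsum : Summable fun k => qExpTerm q z (n + 1 + k) :=
    (summable_qExpTerm hq0.le hq1 z).comp_injective (add_right_injective (n + 1))
  have hcorr : q ^ (n ^ 2) * z ^ (2 * n + 1) / (qPoch q n * qPoch q (n + 1)) =
      qExpTerm q z (n + 1) * qExpTerm q z n := by
    rw [qExpTerm_succ_eq, qExpTerm, ← mul_pred_div_two_add_mul_succ_div_two, pow_add]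
    ring
  calc _ = (∑' k, qExpTerm q z (n + 1 + k)) * (qExpTerm q z (n + 1) - qExpTerm q z n) +
        qExpTerm q z (n + 1 + 0) * qExpTerm q z n := by
        rw [← qExpTerm_succ_eq, hcorr]
        rfl
    _ = _ := tsum_mul_sub_add_eq_tsum_sub_shift hsum _ _
    _ = _ := tsum_congr (qExpTerm_mul_sub hq0.le hq1 z n)

theorem J_linear_identity (q z : ℝ) (n : ℕ) (hq0 : 0 < q) (hq1 : q < 1) (hz : 0 < z) :
    qExpTail q z (n + 1) *
        (q ^ (n * (n + 1) / 2) * z ^ (n + 1) / qPoch q (n + 1) -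
          q ^ (n * (n - 1) / 2) * z ^ n / qPoch q n) +
        q ^ (n ^ 2) * z ^ (2 * n + 1) / (qPoch q n * qPoch q (n + 1)) =
      ∑' k : ℕ, q ^ ((n * (n + 1) + (n + k) * (n + k + 1)) / 2) * (1 - q ^ (k + 1)) /
        (qPoch q (n + 1) * qPoch q (n + k + 2)) * z ^ (2 * n + 2 + k) :=
  J_linear_identity_general q z n hq0 hq1
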